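/- Let ζ = (ζ_0, ζ_1, …, ζ_{2n−2}) be the signature of some vector in ℂⁿ with all ζ_{2k} > 0. Define s_0 = √ζ_0 and recursively s_{ℓ+1} = (√(ζ_{2ℓ}·ζ_{2ℓ+2})/conj(s_ℓ)) · exp(i·φ(ζ_{2ℓ+1}; √ζ_{2ℓ}, √ζ_{2ℓ+2})) for ℓ ∈ {0,…,n−2}, where φ(ζ;a,b) = arccos((8ζ−3(a²+b²))/(2ab)). Then |s_ℓ|² = ζ_{2ℓ} for all ℓ ∈ {0,…,n−1} and ψ(s_ℓ, s_{ℓ+1}) = ζ_{2ℓ+1} for all ℓ ∈ {0,…,n−2}; i.e., Υ(s_0,…,s_{n−1}) = ζ. -/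

import Mathlib

noncomputable def psi (a b : ℂ) : ℝ :=
  (1/4) * ‖a + b‖ ^ 2 + (1/8) * ‖a - b‖ ^ 2

noncomputable def phi (ζ a b : ℝ) : ℝ :=
  Real.arccos ((8 * ζ - 3 * (a ^ 2 + b ^ 2)) / (2 * a * b))

lemma psi_eq (a b : ℂ) : psi a b = 3/8 * (‖a‖ ^ 2 + ‖b‖ ^ 2)
    + 1/4 * (a * (starRingEnd ℂ) b).re := by
  simp only [psi, Complex.sq_norm, Complex.normSq_add, Complex.normSq_sub]
  ring

theorem standard_reconstruction (n : ℕ) (hn : 1 ≤ n) (ζ : ℕ → ℝ)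
    (hpos : ∀ k < n, 0 < ζ (2 * k))
    (hsig : ∃ x : ℕ → ℂ,
      (∀ k < n, ‖x k‖ ^ 2 = ζ (2 * k)) ∧
      (∀ ℓ, ℓ + 1 < n → psi (x ℓ) (x (ℓ + 1)) = ζ (2 * ℓ + 1)))
    (s : ℕ → ℂ)
    (hs0 : s 0 = ((Real.sqrt (ζ 0) : ℝ) : ℂ))
    (hrec : ∀ ℓ, ℓ + 1 < n →
      s (ℓ + 1) = ((Real.sqrt (ζ (2 * ℓ) * ζ (2 * ℓ + 2)) : ℝ) : ℂ) / (starRingEnd ℂ) (s ℓ) *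
        Complex.exp (((phi (ζ (2 * ℓ + 1)) (Real.sqrt (ζ (2 * ℓ)))
          (Real.sqrt (ζ (2 * ℓ + 2))) : ℝ) : ℂ) * Complex.I)) :
    (∀ k < n, ‖s k‖ ^ 2 = ζ (2 * k)) ∧
    (∀ ℓ, ℓ + 1 < n → psi (s ℓ) (s (ℓ + 1)) = ζ (2 * ℓ + 1)) := by
  obtain ⟨x, hx1, hx2⟩ := hsig
  have habs : ∀ k, k < n → ‖s k‖ ^ 2 = ζ (2 * k) := by
    intro k
    induction k with
    | zero =>
      intro hk
      rw [hs0, Complex.norm_real, Real.norm_eq_abs, abs_of_nonneg (Real.sqrt_nonneg _),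
        Real.sq_sqrt (hpos 0 hk).le]
    | succ k ih =>
      intro hk
      have hk' : k < n := by omega
      have h1 := ih hk'
      have hpk := hpos k hk'
      have hpk1 := hpos (k + 1) hk
      rw [hrec k (by omega)]
      rw [norm_mul, norm_div, Complex.norm_real, Real.norm_eq_abs, Complex.norm_conj,
        Complex.norm_exp_ofReal_mul_I, mul_one, div_pow,
        abs_of_nonneg (Real.sqrt_nonneg _), Real.sq_sqrt (by positivity), h1,
        mul_div_cancel_left₀ _ hpk.ne']
      congr 1
  refine ⟨habs, ?_⟩
  intro ℓ hℓ
  have hℓ' : ℓ < n := by omega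
  have hpℓ := hpos ℓ hℓ'
  have hpℓ1 := hpos (ℓ + 1) hℓ
  have h22 : 2 * (ℓ + 1) = 2 * ℓ + 2 := by ring
  rw [h22] at hpℓ1
  set a := Real.sqrt (ζ (2 * ℓ)) with ha
  set b := Real.sqrt (ζ (2 * ℓ + 2)) with hb
  have hapos : 0 < a := Real.sqrt_pos.mpr hpℓ
  have hbpos : 0 < b := Real.sqrt_pos.mpr hpℓ1
  have ha2 : a ^ 2 = ζ (2 * ℓ) := Real.sq_sqrt hpℓ.le
  have hb2 : b ^ 2 = ζ (2 * ℓ + 2) := Real.sq_sqrt hpℓ1.le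
  have hab : Real.sqrt (ζ (2 * ℓ) * ζ (2 * ℓ + 2)) = a * b := Real.sqrt_mul hpℓ.le _
  -- bound on the arccos argument from the existence of x
  have hxa : ‖x ℓ‖ = a := by
    rw [ha, ← hx1 ℓ hℓ', Real.sqrt_sq (norm_nonneg _)]
  have hxb : ‖x (ℓ + 1)‖ = b := by
    have h := hx1 (ℓ + 1) hℓ
    rw [h22] at h
    rw [hb, ← h, Real.sqrt_sq (norm_nonneg _)]
  have hre : (x ℓ * (starRingEnd ℂ) (x (ℓ + 1))).re
      = 4 * (ζ (2 * ℓ + 1) - 3/8 * (ζ (2 * ℓ) + ζ (2 * ℓ + 2))) := by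
    have h := hx2 ℓ hℓ
    rw [psi_eq, hx1 ℓ hℓ'] at h
    have h2 : ‖x (ℓ + 1)‖ ^ 2 = ζ (2 * ℓ + 2) := by
      rw [hx1 (ℓ + 1) hℓ, h22]
    rw [h2] at h
    linarith
  have hrebound : |(x ℓ * (starRingEnd ℂ) (x (ℓ + 1))).re| ≤ a * b := by
    calc |(x ℓ * (starRingEnd ℂ) (x (ℓ + 1))).re|
        ≤ ‖x ℓ * (starRingEnd ℂ) (x (ℓ + 1))‖ := Complex.abs_re_le_norm _
      _ = a * b := by rw [norm_mul, Complex.norm_conj, hxa, hxb]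
  set t : ℝ := (8 * ζ (2 * ℓ + 1) - 3 * (a ^ 2 + b ^ 2)) / (2 * a * b) with ht
  have habpos : 0 < 2 * a * b := by positivity
  have htbound : |t| ≤ 1 := by
    rw [ht, abs_div, abs_of_pos habpos, div_le_one habpos]
    have : |8 * ζ (2 * ℓ + 1) - 3 * (a ^ 2 + b ^ 2)|
        = |2 * (x ℓ * (starRingEnd ℂ) (x (ℓ + 1))).re| := by
      rw [hre, ha2, hb2]; ring_nf
    rw [this, abs_mul]
    simp only [abs_two]
    nlinarith [hrebound]
  have hcos : Real.cos (phi (ζ (2 * ℓ + 1)) a b) = t := by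
    rw [phi, Real.cos_arccos (by linarith [abs_le.mp htbound])
      (by linarith [abs_le.mp htbound])]
  -- compute conj(s ℓ) * s (ℓ+1)
  have hsℓ2 := habs ℓ hℓ'
  have hsℓne : s ℓ ≠ 0 := by
    intro h
    rw [h] at hsℓ2
    simp at hsℓ2
    linarith
  have hcne : (starRingEnd ℂ) (s ℓ) ≠ 0 := by
    simpa using hsℓne
  have key : (starRingEnd ℂ) (s ℓ) * s (ℓ + 1)
      = ((a * b : ℝ) : ℂ) * Complex.exp (((phi (ζ (2 * ℓ + 1)) a b : ℝ) : ℂ) * Complex.I) := by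
    rw [hrec ℓ hℓ, hab]
    field_simp
    rw [mul_comm Complex.I]
  have hre2 : (s ℓ * (starRingEnd ℂ) (s (ℓ + 1))).re = a * b * t := by
    have : s ℓ * (starRingEnd ℂ) (s (ℓ + 1))
        = (starRingEnd ℂ) ((starRingEnd ℂ) (s ℓ) * s (ℓ + 1)) := by
      rw [map_mul, Complex.conj_conj]
    rw [this, key, Complex.conj_re, Complex.re_ofReal_mul,
      Complex.exp_ofReal_mul_I_re, hcos]
  have hs12 : ‖s (ℓ + 1)‖ ^ 2 = ζ (2 * ℓ + 2) := by
    rw [habs (ℓ + 1) hℓ, h22]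
  rw [psi_eq, hsℓ2, hs12, hre2, ht]
  rw [← ha2, ← hb2]
  field_simp
  ring
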